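/- Let k ≥ 1 and ρ ≥ 1 be natural numbers and let p', q' : Fin (k·ρ) → ℝ be positive vectors. Define the block-aggregated vectors p, q : Fin k → ℝ by p_r = Σ_{i=0}^{ρ-1} p'_{rρ+i} and q_r = Σ_{i=0}^{ρ-1} q'_{rρ+i}. Then the Chernoff information satisfies C(p‖q) ≤ C(p'‖q'), i.e. −log(inf_{λ∈(0,1)} Σ_r p_r^{1-λ} q_r^{λ}) ≤ −log(inf_{λ∈(0,1)} Σ_j p'_j^{1-λ} q'_j^{λ}); equivalently inf_{λ∈(0,1)} Σ_r p_r^{1-λ} q_r^{λ} ≥ inf_{λ∈(0,1)} Σ_j p'_j^{1-λ} q'_j^{λ}. -/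

import Mathlib

/-!
For each `λ ∈ (0,1)`, Hölder's inequality with the conjugate exponents `1/(1-λ)` and `1/λ`,
applied inside each block, gives `∑_i p'_{rρ+i}^(1-λ) q'_{rρ+i}^λ ≤ p_r^(1-λ) q_r^λ`; summing
over the blocks, the Chernoff sum can only grow under aggregation, and hence so does its infimum
over `λ`. Since `min a b ≤ a^(1-λ) b^λ`, the fine infimum is at least `∑_j min(p'_j, q'_j) > 0`,
so `-log` turns the comparison of infima into the comparison of Chernoff informations.
-/

/-- The index `r*ρ + i` of the `i`-th fine quantizer cell inside the `r`-th coarse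
block, as an element of `Fin (k * ρ)`. -/
def blockIdx {k ρ : ℕ} (r : Fin k) (i : Fin ρ) : Fin (k * ρ) :=
  ⟨r.val * ρ + i.val, by
    have h1 : r.val * ρ + i.val < (r.val + 1) * ρ := by
      rw [Nat.succ_mul]; exact Nat.add_lt_add_left i.isLt _
    exact lt_of_lt_of_le h1 (Nat.mul_le_mul_right ρ r.isLt)⟩

/-- The Chernoff information `C(p‖q) = -log (inf_{λ ∈ (0,1)} ∑ i, p i^{1-λ} q i^λ)`
between two positive vectors on a finite index type. -/
noncomputable def chernoffInfo {ι : Type*} [Fintype ι] (p q : ι → ℝ) : ℝ :=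
  -Real.log (sInf ((fun l : ℝ => ∑ i, p i ^ (1 - l) * q i ^ l) '' Set.Ioo (0 : ℝ) 1))

open Real Finset

noncomputable def chernoffSum {ι : Type*} [Fintype ι] (p q : ι → ℝ) (l : ℝ) : ℝ :=
  ∑ i, p i ^ (1 - l) * q i ^ l

def blockSum {M : Type*} [AddCommMonoid M] {k ρ : ℕ} (f : Fin (k * ρ) → M) (r : Fin k) : M :=
  ∑ i, f (blockIdx r i)

lemma finProdFinEquiv_eq_blockIdx {k ρ : ℕ} (x : Fin k × Fin ρ) :
    finProdFinEquiv x = blockIdx x.1 x.2 :=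
  Fin.ext <| by simp [finProdFinEquiv, blockIdx, Nat.add_comm, Nat.mul_comm]

lemma sum_blockIdx {M : Type*} [AddCommMonoid M] {k ρ : ℕ} (f : Fin (k * ρ) → M) :
    ∑ j, f j = ∑ r, blockSum f r := by
  simp only [blockSum, ← Fintype.sum_prod_type', ← finProdFinEquiv.sum_comp f,
    finProdFinEquiv_eq_blockIdx]

lemma sum_rpow_one_sub_mul_rpow_le {ι : Type*} (s : Finset ι) {a b : ι → ℝ}
    (ha : ∀ i ∈ s, 0 ≤ a i) (hb : ∀ i ∈ s, 0 ≤ b i) {l : ℝ} (hl : l ∈ Set.Ioo (0 : ℝ) 1) :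
    ∑ i ∈ s, a i ^ (1 - l) * b i ^ l ≤ (∑ i ∈ s, a i) ^ (1 - l) * (∑ i ∈ s, b i) ^ l := by
  obtain ⟨hl0, hl1⟩ := hl
  have hl1' : 1 - l ≠ 0 := by linarith
  have := inner_le_Lp_mul_Lq_of_nonneg s (Real.HolderConjugate.one_sub_inv_inv hl0 hl1)
    (fun i hi => rpow_nonneg (ha i hi) (1 - l)) (fun i hi => rpow_nonneg (hb i hi) l)
  have ha' : ∑ i ∈ s, (a i ^ (1 - l)) ^ (1 - l)⁻¹ = ∑ i ∈ s, a i :=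
    sum_congr rfl fun i hi => rpow_rpow_inv (ha i hi) hl1'
  have hb' : ∑ i ∈ s, (b i ^ l) ^ l⁻¹ = ∑ i ∈ s, b i :=
    sum_congr rfl fun i hi => rpow_rpow_inv (hb i hi) hl0.ne'
  simpa only [ha', hb', one_div, inv_inv] using this

lemma min_le_rpow_one_sub_mul_rpow {a b l : ℝ} (ha : 0 ≤ a) (hb : 0 ≤ b)
    (hl0 : 0 ≤ l) (hl1 : l ≤ 1) : min a b ≤ a ^ (1 - l) * b ^ l := by
  calc min a b = min a b ^ (1 - l) * min a b ^ l := by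
        rw [← rpow_add' (le_min ha hb) (by norm_num), sub_add_cancel, rpow_one]
    _ ≤ a ^ (1 - l) * b ^ l := by
        gcongr ?_ * ?_
        · exact rpow_le_rpow (le_min ha hb) (min_le_left a b) (by linarith)
        · exact rpow_le_rpow (le_min ha hb) (min_le_right a b) hl0

lemma csInf_image_mono {α β : Type*} [ConditionallyCompleteLattice β] {s : Set α}
    {f g : α → β} (hs : s.Nonempty) (hf : BddBelow (f '' s)) (hfg : ∀ x ∈ s, f x ≤ g x) :
    sInf (f '' s) ≤ sInf (g '' s) :=
  le_csInf (hs.image g) <| by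
    rintro _ ⟨x, hx, rfl⟩
    exact (csInf_le hf (Set.mem_image_of_mem f hx)).trans (hfg x hx)

lemma sum_min_le_chernoffSum {ι : Type*} [Fintype ι] {p q : ι → ℝ} (hp : ∀ i, 0 ≤ p i)
    (hq : ∀ i, 0 ≤ q i) {l : ℝ} (hl0 : 0 ≤ l) (hl1 : l ≤ 1) :
    ∑ i, min (p i) (q i) ≤ chernoffSum p q l :=
  sum_le_sum fun i _ => min_le_rpow_one_sub_mul_rpow (hp i) (hq i) hl0 hl1

lemma chernoffSum_le_chernoffSum_blockSum {k ρ : ℕ} {p q : Fin (k * ρ) → ℝ}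
    (hp : ∀ j, 0 ≤ p j) (hq : ∀ j, 0 ≤ q j) {l : ℝ} (hl : l ∈ Set.Ioo (0 : ℝ) 1) :
    chernoffSum p q l ≤ chernoffSum (blockSum p) (blockSum q) l := by
  rw [chernoffSum, sum_blockIdx]
  exact sum_le_sum fun r _ =>
    sum_rpow_one_sub_mul_rpow_le _ (fun i _ => hp _) (fun i _ => hq _) hl

/-- Merging `ρ` consecutive quantizer cells cannot increase the Chernoff
information: `C(p‖q) ≤ C(p'‖q')`, equivalently the infimum over `λ ∈ (0,1)` of
the Chernoff-type sum for the coarse vectors is at least that for the fine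
vectors. -/
theorem block_aggregation_chernoffInfo_le
    (k ρ : ℕ) (hk : 1 ≤ k) (hρ : 1 ≤ ρ)
    (p' q' : Fin (k * ρ) → ℝ)
    (hp' : ∀ j, 0 < p' j) (hq' : ∀ j, 0 < q' j)
    (p q : Fin k → ℝ)
    (hp : ∀ r, p r = ∑ i : Fin ρ, p' (blockIdx r i))
    (hq : ∀ r, q r = ∑ i : Fin ρ, q' (blockIdx r i)) :
    chernoffInfo p q ≤ chernoffInfo p' q' ∧
    sInf ((fun l : ℝ => ∑ r, p r ^ (1 - l) * q r ^ l) '' Set.Ioo (0 : ℝ) 1)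
      ≥ sInf ((fun l : ℝ => ∑ j, p' j ^ (1 - l) * q' j ^ l) '' Set.Ioo (0 : ℝ) 1) := by
  have : Nonempty (Fin (k * ρ)) := ⟨⟨0, Nat.mul_pos hk hρ⟩⟩
  obtain rfl : p = blockSum p' := funext hp
  obtain rfl : q = blockSum q' := funext hq
  have hIoo : (Set.Ioo (0 : ℝ) 1).Nonempty := ⟨1 / 2, by norm_num⟩
  have hbound : ∀ y ∈ chernoffSum p' q' '' Set.Ioo 0 1, ∑ j, min (p' j) (q' j) ≤ y := by
    rintro _ ⟨l, hl, rfl⟩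
    exact sum_min_le_chernoffSum (fun j => (hp' j).le) (fun j => (hq' j).le) hl.1.le hl.2.le
  have hmono : sInf (chernoffSum p' q' '' Set.Ioo 0 1)
      ≤ sInf (chernoffSum (blockSum p') (blockSum q') '' Set.Ioo 0 1) :=
    csInf_image_mono hIoo ⟨_, hbound⟩ fun l hl =>
      chernoffSum_le_chernoffSum_blockSum (fun j => (hp' j).le) (fun j => (hq' j).le) hl
  have hpos : 0 < sInf (chernoffSum p' q' '' Set.Ioo 0 1) :=
    (sum_pos (fun j _ => lt_min (hp' j) (hq' j)) univ_nonempty).trans_le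
      (le_csInf (hIoo.image _) hbound)
  exact ⟨neg_le_neg (log_le_log hpos hmono), hmono⟩
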